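/- Let k ≥ 1, J = [[0, I_k], [−I_k, 0]] ∈ M_{2k}(ℝ), G_ℂ = { A ∈ GL_{2k}(ℝ) : A·J = J·A }, and V = [[0, I_k], [I_k, 0]] ∈ M_{2k}(ℝ). Then V is invertible with V² = I, V·J = −J·V (so V lies in the normalizer N(G_ℂ) but not in G_ℂ), and every B ∈ N(G_ℂ) can be written in exactly one of the two forms B = C or B = C·V with C ∈ G_ℂ. Consequently G_ℂ has index 2 in N(G_ℂ). -/

import Mathlib

/-
If `B` normalizes `G_ℂ`, then `B⁻¹ J B` commutes with `G_ℂ`, hence with every matrix commuting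
with `J`; the commutant of those is the copy `ℝ[J] ≅ ℂ` of the complex scalars. Being a square
root of `-1` in `ℂ`, `B⁻¹ J B` is `±J`: for `+J` the matrix `B` lies in `G_ℂ`, for `-J` so does
`B V`, since conjugation by `V` also sends `J` to `-J`.
-/

open Matrix

/-- The standard complex structure matrix `J = [[0, I], [-I, 0]]`. -/
def symplJ (k : ℕ) : Matrix (Fin k ⊕ Fin k) (Fin k ⊕ Fin k) ℝ :=
  Matrix.fromBlocks 0 1 (-1) 0

/-- The image `G_ℂ = { A ∈ GL_{2k}(ℝ) : A·J = J·A }` of `GL_k(ℂ)` under its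
standard real embedding, as a subgroup of `GL_{2k}(ℝ)`. -/
def GLC (k : ℕ) : Subgroup (GL (Fin k ⊕ Fin k) ℝ) where
  carrier := {A | (A : Matrix (Fin k ⊕ Fin k) (Fin k ⊕ Fin k) ℝ) * symplJ k =
    symplJ k * (A : Matrix (Fin k ⊕ Fin k) (Fin k ⊕ Fin k) ℝ)}
  one_mem' := by simp
  mul_mem' := by
    intro a b ha hb
    simp only [Set.mem_setOf_eq] at *
    set M := (a : Matrix (Fin k ⊕ Fin k) (Fin k ⊕ Fin k) ℝ)
    set N := (b : Matrix (Fin k ⊕ Fin k) (Fin k ⊕ Fin k) ℝ)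
    have : ((a * b : GL (Fin k ⊕ Fin k) ℝ) : Matrix (Fin k ⊕ Fin k) (Fin k ⊕ Fin k) ℝ)
        = M * N := rfl
    rw [this, mul_assoc, hb, ← mul_assoc, ha, mul_assoc]
  inv_mem' := by
    intro a ha
    simp only [Set.mem_setOf_eq] at *
    set M := (a : Matrix (Fin k ⊕ Fin k) (Fin k ⊕ Fin k) ℝ)
    set N := ((a⁻¹ : GL (Fin k ⊕ Fin k) ℝ) : Matrix (Fin k ⊕ Fin k) (Fin k ⊕ Fin k) ℝ)
    have hMN : M * N = 1 := a.mul_inv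
    have hNM : N * M = 1 := a.inv_mul
    calc N * symplJ k = N * symplJ k * (M * N) := by rw [hMN, mul_one]
      _ = N * (symplJ k * M) * N := by noncomm_ring
      _ = N * (M * symplJ k) * N := by rw [ha]
      _ = (N * M) * (symplJ k * N) := by noncomm_ring
      _ = symplJ k * N := by rw [hNM, one_mul]

/-- The matrix `V = [[0, I], [I, 0]]` as an element of `GL_{2k}(ℝ)`. -/
def swapV (k : ℕ) : GL (Fin k ⊕ Fin k) ℝ where
  val := Matrix.fromBlocks 0 1 1 0
  inv := Matrix.fromBlocks 0 1 1 0
  val_inv := by simp [Matrix.fromBlocks_multiply, ← Matrix.fromBlocks_one]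
  inv_val := by simp [Matrix.fromBlocks_multiply, ← Matrix.fromBlocks_one]

section General

variable {M : Type*} [Monoid M]

theorem Commute.units_conj_iff (u : Mˣ) (a b : M) :
    Commute (↑u * a * ↑u⁻¹) b ↔ Commute a (↑u⁻¹ * b * ↑u) := by
  constructor <;> intro h
  · have := congr(↑u⁻¹ * $h.eq * ↑u)
    simpa [Commute, SemiconjBy, mul_assoc] using this
  · have := congr(↑u * $h.eq * ↑u⁻¹)
    simpa [Commute, SemiconjBy, mul_assoc] using this

variable {G : Type*} [Group G]

theorem Subgroup.xor_mul_inv_mem {H : Subgroup G} {v b : G} (hv : v ∉ H)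
    (hb : b ∈ H ∨ b * v⁻¹ ∈ H) : Xor (b * v⁻¹ ∈ H) (b ∈ H) := by
  rcases hb with hb | hb
  · exact Or.inr ⟨hb, fun h => hv (inv_mem_iff.mp ((H.mul_mem_cancel_left hb).mp h))⟩
  · exact Or.inl ⟨hb, fun h => hv (inv_mem_iff.mp ((H.mul_mem_cancel_left h).mp hb))⟩

theorem Subgroup.index_subgroupOf_eq_two {H K : Subgroup G} {v : G} (hvK : v ∈ K)
    (hvH : v ∉ H) (h : ∀ b ∈ K, b ∈ H ∨ b * v⁻¹ ∈ H) : (H.subgroupOf K).index = 2 :=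
  Subgroup.index_eq_two_iff.mpr ⟨⟨v, hvK⟩⁻¹, fun b => xor_mul_inv_mem hvH (h b b.2)⟩

end General

namespace Matrix

variable {n α : Type*} [Fintype n] [DecidableEq n]

theorem exists_isUnit_sub_scalar [Field α] [Infinite α] (A : Matrix n n α) :
    ∃ c : α, IsUnit (A - scalar n c) := by
  obtain ⟨c, hc⟩ := (finite_spectrum A).exists_notMem
  rw [spectrum.mem_iff, not_not] at hc
  exact ⟨c, by rw [← neg_sub]; exact hc.neg⟩

theorem exists_eq_fromBlocks_scalar_of_commute [CommRing α] {N : Matrix (n ⊕ n) (n ⊕ n) α}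
    (h : ∀ P : Matrix n n α, Commute (fromBlocks P 0 0 P) N) :
    ∃ a b c d : α, N = fromBlocks (scalar n a) (scalar n b) (scalar n c) (scalar n d) := by
  have hblocks : ∀ P : Matrix n n α, Commute P N.toBlocks₁₁ ∧ Commute P N.toBlocks₁₂ ∧
      Commute P N.toBlocks₂₁ ∧ Commute P N.toBlocks₂₂ := by
    intro P
    have := (h P).eq
    rw [← fromBlocks_toBlocks N, fromBlocks_multiply, fromBlocks_multiply] at this
    simp only [zero_mul, mul_zero, add_zero, zero_add, fromBlocks_inj] at this
    exact ⟨this.1, this.2.1, this.2.2.1, this.2.2.2⟩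
  have hscalar : ∀ X : Matrix n n α, (∀ P, Commute P X) → ∃ a, scalar n a = X :=
    fun X hX => mem_range_scalar_iff_commute_single'.mpr fun i j => hX _
  obtain ⟨a, ha⟩ := hscalar _ fun P => (hblocks P).1
  obtain ⟨b, hb⟩ := hscalar _ fun P => (hblocks P).2.1
  obtain ⟨c, hc⟩ := hscalar _ fun P => (hblocks P).2.2.1
  obtain ⟨d, hd⟩ := hscalar _ fun P => (hblocks P).2.2.2
  exact ⟨a, b, c, d, by rw [ha, hb, hc, hd, fromBlocks_toBlocks]⟩

end Matrix

section ComplexStructure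

variable {k : ℕ}

local notation "𝕄" k:max => Matrix (Fin k ⊕ Fin k) (Fin k ⊕ Fin k) ℝ

theorem symplJ_mul_self (k : ℕ) : symplJ k * symplJ k = -1 := by
  simp [symplJ, fromBlocks_multiply, ← fromBlocks_one, fromBlocks_neg]

theorem mem_GLC_iff_commute {A : GL (Fin k ⊕ Fin k) ℝ} :
    A ∈ GLC k ↔ Commute (A : 𝕄 k) (symplJ k) :=
  Iff.rfl

theorem mem_GLC_iff_conj {A : GL (Fin k ⊕ Fin k) ℝ} :
    A ∈ GLC k ↔ (↑A⁻¹ : 𝕄 k) * symplJ k * (A : 𝕄 k) = symplJ k := by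
  rw [mul_assoc, Units.inv_mul_eq_iff_eq_mul, eq_comm]
  rfl

/-- `a + b i ↦ a + b J`: the real matrices of the complex scalars acting on `ℂ^k`. -/
noncomputable def complexScalar (k : ℕ) : ℂ →ₐ[ℝ] 𝕄 k :=
  Complex.liftAux (symplJ k) (symplJ_mul_self k)

/-- `A - c` is invertible for all but finitely many `c`, so `A` is a scalar plus an element
of `G_ℂ`. -/
theorem commute_of_forall_mem_GLC_commute {N A : 𝕄 k} (hN : ∀ g ∈ GLC k, Commute (g : 𝕄 k) N)
    (hA : Commute A (symplJ k)) : Commute A N := by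
  obtain ⟨c, hc⟩ := A.exists_isUnit_sub_scalar
  obtain ⟨u, hu⟩ := (Matrix.isUnit_iff_isUnit_det _).mpr ((Matrix.isUnit_iff_isUnit_det _).mp hc)
  have hu_mem : u ∈ GLC k := by
    rw [mem_GLC_iff_commute, hu]
    exact hA.sub_left (scalar_commute c (fun _ => mul_comm _ _) _)
  have := (hN u hu_mem).add_left (scalar_commute c (fun _ => mul_comm _ _) N)
  rwa [hu, sub_add_cancel] at this

theorem mem_range_complexScalar_of_commute {N : 𝕄 k}
    (hN : ∀ A, Commute A (symplJ k) → Commute A N) : N ∈ (complexScalar k).range := by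
  have hdiag : ∀ P : Matrix (Fin k) (Fin k) ℝ, Commute (fromBlocks P 0 0 P) N := fun P =>
    hN _ (by simp [Commute, SemiconjBy, symplJ, fromBlocks_multiply])
  obtain ⟨a, b, c, d, rfl⟩ := exists_eq_fromBlocks_scalar_of_commute hdiag
  have hJ := (hN _ (Commute.refl (symplJ k))).eq
  simp only [symplJ, fromBlocks_multiply, fromBlocks_inj] at hJ
  obtain ⟨hc, hd⟩ : scalar (Fin k) c = -scalar (Fin k) b ∧ scalar (Fin k) d = scalar (Fin k) a := by
    simpa [eq_comm] using And.intro hJ.1 hJ.2.1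
  refine (AlgHom.mem_range _).mpr ⟨⟨a, b⟩, ?_⟩
  rw [hc, hd, complexScalar, Complex.liftAux_apply, symplJ, Algebra.algebraMap_eq_smul_one,
    ← fromBlocks_one, fromBlocks_smul, fromBlocks_smul, fromBlocks_add]
  simp [smul_one_eq_diagonal]

/-- The only square roots of `-1` in `ℂ` are `±i`, and `complexScalar k` is injective once
`k ≠ 0`. -/
theorem eq_symplJ_or_eq_neg_of_mul_self (hk : 1 ≤ k) {N : 𝕄 k}
    (hN : N ∈ (complexScalar k).range) (hNN : N * N = -1) : N = symplJ k ∨ N = -symplJ k := by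
  have : NeZero k := ⟨by omega⟩
  obtain ⟨z, rfl⟩ := (AlgHom.mem_range _).mp hN
  have hI : complexScalar k Complex.I = symplJ k := Complex.liftAux_apply_I _ _
  have hz : complexScalar k (z * z) = complexScalar k (Complex.I * Complex.I) := by
    rw [map_mul, map_mul, hNN, hI, symplJ_mul_self]
  rcases mul_self_eq_mul_self_iff.mp (RingHom.injective (complexScalar k : ℂ →+* 𝕄 k) hz)
    with rfl | rfl
  · exact Or.inl hI
  · exact Or.inr (by rw [map_neg, hI])

theorem conj_symplJ_of_mem_normalizer (hk : 1 ≤ k) {B : GL (Fin k ⊕ Fin k) ℝ}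
    (hB : B ∈ Subgroup.normalizer (GLC k : Set (GL (Fin k ⊕ Fin k) ℝ))) :
    (↑B⁻¹ : 𝕄 k) * symplJ k * (B : 𝕄 k) = symplJ k ∨
      (↑B⁻¹ : 𝕄 k) * symplJ k * (B : 𝕄 k) = -symplJ k := by
  have hcomm : ∀ g ∈ GLC k, Commute (g : 𝕄 k) ((↑B⁻¹ : 𝕄 k) * symplJ k * (B : 𝕄 k)) :=
    fun g hg => (Commute.units_conj_iff B _ _).mp ((Subgroup.mem_normalizer_iff.mp hB g).mp hg)
  refine eq_symplJ_or_eq_neg_of_mul_self hk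
    (mem_range_complexScalar_of_commute fun _ => commute_of_forall_mem_GLC_commute hcomm) ?_
  calc (↑B⁻¹ : 𝕄 k) * symplJ k * ↑B * (↑B⁻¹ * symplJ k * ↑B)
      = ↑B⁻¹ * (symplJ k * symplJ k) * ↑B := by simp [mul_assoc]
    _ = -1 := by simp [symplJ_mul_self]

theorem swapV_mul_self (k : ℕ) : (swapV k : 𝕄 k) * swapV k = 1 :=
  (swapV k).val_inv

theorem swapV_inv (k : ℕ) : (swapV k)⁻¹ = swapV k :=
  Units.ext rfl

theorem swapV_mul_symplJ (k : ℕ) : (swapV k : 𝕄 k) * symplJ k = -(symplJ k * swapV k) := by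
  simp [swapV, symplJ, fromBlocks_multiply, fromBlocks_neg]

theorem swapV_conj_symplJ (k : ℕ) : (↑(swapV k)⁻¹ : 𝕄 k) * symplJ k * swapV k = -symplJ k := by
  rw [swapV_inv, swapV_mul_symplJ, neg_mul, mul_assoc, swapV_mul_self, mul_one]

theorem swapV_notMem_GLC (hk : 1 ≤ k) : swapV k ∉ GLC k := by
  have : NeZero k := ⟨by omega⟩
  intro h
  have := congr_fun₂ ((mem_GLC_iff_commute.mp h).eq.symm.trans (swapV_mul_symplJ k))
    (Sum.inl 0) (Sum.inl 0)
  norm_num [swapV, symplJ, fromBlocks_multiply] at this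

theorem swapV_mem_normalizer_GLC (k : ℕ) :
    swapV k ∈ Subgroup.normalizer (GLC k : Set (GL (Fin k ⊕ Fin k) ℝ)) := by
  refine Subgroup.mem_normalizer_iff.mpr fun g => ?_
  rw [mem_GLC_iff_commute, mem_GLC_iff_commute, Units.val_mul, Units.val_mul,
    Commute.units_conj_iff, swapV_conj_symplJ, Commute.neg_right_iff]

theorem mem_GLC_or_mul_inv_swapV_mem_GLC (hk : 1 ≤ k) {B : GL (Fin k ⊕ Fin k) ℝ}
    (hB : B ∈ Subgroup.normalizer (GLC k : Set (GL (Fin k ⊕ Fin k) ℝ))) :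
    B ∈ GLC k ∨ B * (swapV k)⁻¹ ∈ GLC k := by
  rw [mem_GLC_iff_conj, mem_GLC_iff_conj, swapV_inv, _root_.mul_inv_rev, Units.val_mul,
    Units.val_mul]
  rcases conj_symplJ_of_mem_normalizer hk hB with h | h
  · exact Or.inl h
  · right
    calc (↑(swapV k)⁻¹ : 𝕄 k) * ↑B⁻¹ * symplJ k * (↑B * ↑(swapV k))
        = ↑(swapV k)⁻¹ * (↑B⁻¹ * symplJ k * ↑B) * ↑(swapV k) := by simp only [mul_assoc]
      _ = symplJ k := by rw [h, mul_neg, neg_mul, swapV_conj_symplJ, neg_neg]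

end ComplexStructure

/-- Splitting and semidirect product decomposition in the paper's Lemma 6.1
(lem:N(GL(C))): `V² = I`, `V·J = -J·V`, `V` normalizes `G_ℂ` without lying in
it, every `B ∈ N(G_ℂ)` is of exactly one of the forms `C` or `C·V` with
`C ∈ G_ℂ`, and `G_ℂ` has index `2` in `N(G_ℂ)`. -/
theorem GLC_normalizer_splitting (k : ℕ) (hk : 1 ≤ k) :
    (swapV k : Matrix (Fin k ⊕ Fin k) (Fin k ⊕ Fin k) ℝ) *
        (swapV k : Matrix (Fin k ⊕ Fin k) (Fin k ⊕ Fin k) ℝ) = 1 ∧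
    (swapV k : Matrix (Fin k ⊕ Fin k) (Fin k ⊕ Fin k) ℝ) * symplJ k =
      -(symplJ k * (swapV k : Matrix (Fin k ⊕ Fin k) (Fin k ⊕ Fin k) ℝ)) ∧
    swapV k ∈ (Subgroup.normalizer (GLC k : Set (GL (Fin k ⊕ Fin k) ℝ))) ∧
    swapV k ∉ GLC k ∧
    (∀ B ∈ (Subgroup.normalizer (GLC k : Set (GL (Fin k ⊕ Fin k) ℝ))),
      Xor' (B ∈ GLC k) (∃ C ∈ GLC k, B = C * swapV k)) ∧
    ((GLC k).subgroupOf (Subgroup.normalizer (GLC k : Set (GL (Fin k ⊕ Fin k) ℝ)))).index = 2 := by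
  have hV := swapV_notMem_GLC hk
  have hN := swapV_mem_normalizer_GLC k
  have hsplit : ∀ B ∈ Subgroup.normalizer (GLC k : Set (GL (Fin k ⊕ Fin k) ℝ)),
      B ∈ GLC k ∨ B * (swapV k)⁻¹ ∈ GLC k := fun B hB => mem_GLC_or_mul_inv_swapV_mem_GLC hk hB
  refine ⟨swapV_mul_self k, swapV_mul_symplJ k, hN, hV, fun B hB => ?_,
    Subgroup.index_subgroupOf_eq_two hN hV hsplit⟩
  have hcoset : (∃ C ∈ GLC k, B = C * swapV k) ↔ B * (swapV k)⁻¹ ∈ GLC k :=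
    ⟨fun ⟨C, hC, hBC⟩ => by rwa [hBC, mul_inv_cancel_right],
      fun h => ⟨_, h, (inv_mul_cancel_right B (swapV k)).symm⟩⟩
  rw [hcoset]
  exact (Subgroup.xor_mul_inv_mem hV (hsplit B hB)).symm
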